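/- arXiv:1612.08490 — 3 statements merged into one kernel-verified Lean document; each statement's English description precedes it below -/
import Mathlib

section
/- Let L be a convex function on a Euclidean space M and θ₀ ∈ M. Suppose there exist κ, A > 0 such that for every subgradient h ∈ ∂L(θ₀) and every θ with ‖θ − θ₀‖₂ ≤ A, L(θ) ≥ L(θ₀) + ⟨h, θ − θ₀⟩ + (κ/2)‖θ − θ₀‖₂². If inf_{h ∈ ∂L(θ₀)} ‖h‖₂ < κA/2, then every global minimizer θ̂ of L satisfies ‖θ̂ − θ₀‖₂ ≤ (2/κ)·inf_{h ∈ ∂L(θ₀)} ‖h‖₂. -/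
/-!
A subgradient `h₀` with `‖h₀‖ < κA/2` confines every minimizer `θ̂` to the ball of radius `A`
around `θ₀`: the sublevel set `{L ≤ L θ₀}` is convex, so it would otherwise contain a point at
distance exactly `A`, where the growth bound forces `‖h₀‖ ≥ κA/2`. Inside the ball, the growth
bound at `θ̂` together with `L θ̂ ≤ L θ₀` gives `κ/2 ‖θ̂ - θ₀‖ ≤ ‖h‖` for every subgradient `h`.
Subgradients exist by Hahn–Banach, so the infimum is not the junk value of `sInf ∅`.
-/

open scoped RealInnerProductSpace Topology
open Set

/-- Separate `(x₀, f x₀)` from the open strict epigraph by a functional `(x, t) ↦ ψ x + t c`;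
then `c < 0`, and `(-c)⁻¹ • ψ` is a subgradient. -/
theorem ConvexOn.exists_strongDual_le {E : Type*} [TopologicalSpace E] [AddCommGroup E]
    [Module ℝ E] [IsTopologicalAddGroup E] [ContinuousSMul ℝ E] {f : E → ℝ}
    (hf : ConvexOn ℝ univ f) (hc : Continuous f) (x₀ : E) :
    ∃ g : StrongDual ℝ E, ∀ x, f x₀ + g (x - x₀) ≤ f x := by
  have hS_open : IsOpen {p : E × ℝ | p.1 ∈ univ ∧ f p.1 < p.2} := by
    simpa only [mem_univ, true_and] using
      isOpen_lt (f := fun p : E × ℝ => f p.1) (hc.comp continuous_fst) continuous_snd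
  obtain ⟨φ, hφ⟩ := geometric_hahn_banach_open_point hf.convex_strict_epigraph hS_open
    (x := (x₀, f x₀)) (by simp)
  set ψ : StrongDual ℝ E := φ.comp (ContinuousLinearMap.inl ℝ E ℝ)
  set c : ℝ := φ (0, 1)
  have hφ_apply : ∀ x t, φ (x, t) = ψ x + t * c := by
    intro x t
    rw [show (x, t) = (x, (0 : ℝ)) + t • ((0 : E), (1 : ℝ)) by simp, map_add, map_smul,
      smul_eq_mul]
    rfl
  have hc_neg : c < 0 := by
    have := hφ (x₀, f x₀ + 1) (by simp)
    rw [hφ_apply, hφ_apply] at this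
    linarith
  have hsupport : ∀ x, ψ x + f x * c ≤ ψ x₀ + f x₀ * c := by
    intro x
    refine le_of_tendsto (f := fun t => ψ x + t * c) (x := 𝓝[>] f x) ?_
      (eventually_nhdsWithin_of_forall fun t ht => ?_)
    · exact ((by fun_prop : Continuous fun t => ψ x + t * c).tendsto (f x)).mono_left
        nhdsWithin_le_nhds
    · have := hφ (x, t) ⟨trivial, ht⟩
      rw [hφ_apply, hφ_apply] at this
      exact this.le
  refine ⟨(-c)⁻¹ • ψ, fun x => ?_⟩
  have hψ : ψ x - ψ x₀ ≤ (f x - f x₀) * -c := by linarith [hsupport x]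
  have : (-c)⁻¹ * (ψ x - ψ x₀) ≤ f x - f x₀ := by
    rwa [inv_mul_le_iff₀ (by linarith), mul_comm]
  simp only [smul_apply, map_sub, smul_eq_mul]
  linarith

section InnerProductSpace

variable {E : Type*} [NormedAddCommGroup E] [InnerProductSpace ℝ E]

theorem ConvexOn.exists_subgradient [FiniteDimensional ℝ E] {f : E → ℝ}
    (hf : ConvexOn ℝ univ f) (x₀ : E) : ∃ h : E, ∀ x, f x₀ + ⟪h, x - x₀⟫ ≤ f x := by
  obtain ⟨g, hg⟩ := hf.exists_strongDual_le (continuousOn_univ.mp (hf.continuousOn isOpen_univ)) x₀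
  exact ⟨(InnerProductSpace.toDual ℝ E).symm g, by simpa using hg⟩

theorem mul_norm_le_norm_of_inner_add_mul_sq_nonpos {h d : E} {c : ℝ}
    (hd : ⟪h, d⟫ + c * ‖d‖ ^ 2 ≤ 0) : c * ‖d‖ ≤ ‖h‖ := by
  have hcs : -(‖h‖ * ‖d‖) ≤ ⟪h, d⟫ := neg_le_of_abs_le (abs_real_inner_le_norm h d)
  rcases (norm_nonneg d).eq_or_lt with hd0 | hd_pos
  · simp [← hd0]
  · exact le_of_mul_le_mul_right (by nlinarith) hd_pos

theorem ConvexOn.norm_sub_le_of_quadratic_growth {f : E → ℝ} (hf : ConvexOn ℝ univ f)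
    {x₀ x h : E} {κ A : ℝ} (hA : 0 ≤ A)
    (hquad : ∀ y, ‖y - x₀‖ ≤ A → f x₀ + ⟪h, y - x₀⟫ + κ / 2 * ‖y - x₀‖ ^ 2 ≤ f y)
    (hh : ‖h‖ < κ * A / 2) (hx : f x ≤ f x₀) : ‖x - x₀‖ ≤ A := by
  by_contra! hfar
  set r := ‖x - x₀‖
  have hr : 0 < r := hA.trans_lt hfar
  set y := x₀ + (A / r) • (x - x₀)
  have hy_mem : y ∈ {z ∈ univ | f z ≤ f x₀} :=
    (hf.convex_le (f x₀)).add_smul_sub_mem ⟨trivial, le_rfl⟩ ⟨trivial, hx⟩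
      ⟨div_nonneg hA hr.le, (div_le_one hr).mpr hfar.le⟩
  have hy_norm : ‖y - x₀‖ = A := by
    rw [add_sub_cancel_left, norm_smul, Real.norm_of_nonneg (div_nonneg hA hr.le),
      div_mul_cancel₀ _ hr.ne']
  have := mul_norm_le_norm_of_inner_add_mul_sq_nonpos (h := h) (d := y - x₀) (c := κ / 2)
    (by linarith [hquad y hy_norm.le, hy_mem.2])
  rw [hy_norm] at this
  linarith

end InnerProductSpace

/-- Quadratic-growth localization: if `L` is convex with a local strong-convexity-type
lower bound around `θ₀` on the ball of radius `A`, and the minimal subgradient norm at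
`θ₀` is below `κA/2`, then every global minimizer is within `(2/κ)·inf‖∂L(θ₀)‖` of `θ₀`. -/
theorem stmt2 {n : ℕ} (L : EuclideanSpace ℝ (Fin n) → ℝ) (hL : ConvexOn ℝ Set.univ L)
    (θ₀ : EuclideanSpace ℝ (Fin n)) (κ A : ℝ) (hκ : 0 < κ) (hA : 0 < A)
    (subdiff : Set (EuclideanSpace ℝ (Fin n)))
    (hsub : subdiff = {h | ∀ θ, L θ₀ + ⟪h, θ - θ₀⟫ ≤ L θ})
    (hquad : ∀ h ∈ subdiff, ∀ θ, ‖θ - θ₀‖ ≤ A →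
      L θ₀ + ⟪h, θ - θ₀⟫ + κ / 2 * ‖θ - θ₀‖ ^ 2 ≤ L θ)
    (hinf : sInf ((fun h => ‖h‖) '' subdiff) < κ * A / 2)
    (θh : EuclideanSpace ℝ (Fin n)) (hmin : ∀ θ, L θh ≤ L θ) :
    ‖θh - θ₀‖ ≤ 2 / κ * sInf ((fun h => ‖h‖) '' subdiff) := by
  have hne : ((fun h => ‖h‖) '' subdiff).Nonempty := by
    subst hsub
    exact Set.Nonempty.image _ (hL.exists_subgradient θ₀)
  obtain ⟨_, ⟨h₀, h₀_mem, rfl⟩, h₀_small⟩ := exists_lt_of_csInf_lt hne hinf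
  have hdist : ‖θh - θ₀‖ ≤ A :=
    hL.norm_sub_le_of_quadratic_growth hA.le (hquad h₀ h₀_mem) h₀_small (hmin θ₀)
  have hlb : κ / 2 * ‖θh - θ₀‖ ≤ sInf ((fun h => ‖h‖) '' subdiff) := by
    refine le_csInf hne ?_
    rintro _ ⟨h, h_mem, rfl⟩
    exact mul_norm_le_norm_of_inner_add_mul_sq_nonpos
      (by linarith [hquad h h_mem θh hdist, hmin θ₀])
  calc ‖θh - θ₀‖ = 2 / κ * (κ / 2 * ‖θh - θ₀‖) := by field_simp
    _ ≤ 2 / κ * sInf ((fun h => ‖h‖) '' subdiff) := by gcongr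
end

section
/- Let λ ≥ 0, let L ∈ C²(ℝⁿ) be convex and R : ℝⁿ → ℝ be convex, and let θ₀ ∈ ℝⁿ. Suppose there exist κ, A > 0 such that the Hessian satisfies ∇²L(θ) ⪰ κI whenever ‖θ − θ₀‖₂ ≤ A. If ‖∇L(θ₀)‖₂ + λ·inf_{h ∈ ∂R(θ₀)} ‖h‖₂ < κA/2, then L_λ(θ) = L(θ) + λR(θ) has a unique global minimizer θ̂, and ‖θ̂ − θ₀‖₂ ≤ (2/κ)(‖∇L(θ₀)‖₂ + λ·inf_{h ∈ ∂R(θ₀)} ‖h‖₂). -/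
/-!
On the closed ball `B` of radius `A` about `θ₀` the Hessian bound makes `L` `κ`-strongly convex, so
for any subgradient `h` of `R` at `θ₀` the objective `F = L + λR` satisfies
`F θ ≥ F θ₀ + r (κ r / 2 - (‖∇L(θ₀)‖ + λ‖h‖))` with `r = ‖θ - θ₀‖`, for `θ ∈ B`.
Picking `h` with `‖∇L(θ₀)‖ + λ‖h‖ < κA/2`, `F` exceeds `F θ₀` on the boundary sphere of `B`, hence,
by convexity, everywhere outside `B`. So `F` attains its minimum, every minimizer lies in `B`, where
`F` is strictly convex, and at a minimizer the same inequality gives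
`r ≤ (2/κ)(‖∇L(θ₀)‖ + λ‖h‖)` for every subgradient `h`.
-/

open scoped RealInnerProductSpace
open Set Metric

theorem add_mul_csInf_image {α : Type*} {s : Set α} (hs : s.Nonempty) {u : α → ℝ}
    (hu : BddBelow (u '' s)) (a : ℝ) {c : ℝ} (hc : 0 ≤ c) :
    a + c * sInf (u '' s) = sInf ((fun x => a + c * u x) '' s) := by
  have hmono : Monotone fun m : ℝ => a + c * m := fun _ _ h =>
    add_le_add_right (mul_le_mul_of_nonneg_left h hc) a
  rw [hmono.map_csInf_of_continuousAt (by fun_prop) (hs.image u) hu, image_image]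

theorem add_deriv_add_half_le_of_le_deriv2 {f f' f'' : ℝ → ℝ} {c : ℝ}
    (hf : ∀ t, HasDerivAt f (f' t) t) (hf' : ∀ t, HasDerivAt f' (f'' t) t)
    (hc : ∀ t ∈ Icc (0 : ℝ) 1, c ≤ f'' t) : f 0 + f' 0 + c / 2 ≤ f 1 := by
  have mono : ∀ {φ φ' : ℝ → ℝ}, (∀ t, HasDerivAt φ (φ' t) t) →
      (∀ t ∈ Icc (0 : ℝ) 1, 0 ≤ φ' t) → MonotoneOn φ (Icc 0 1) := fun hφ hφ' =>
    monotoneOn_of_hasDerivWithinAt_nonneg (convex_Icc 0 1)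
      (fun t _ => (hφ t).continuousAt.continuousWithinAt) (fun t _ => (hφ t).hasDerivWithinAt)
      (fun t ht => hφ' t (interior_subset ht))
  have h0 : (0 : ℝ) ∈ Icc (0 : ℝ) 1 := by simp
  have h1 : (1 : ℝ) ∈ Icc (0 : ℝ) 1 := by simp
  have hslope : ∀ t ∈ Icc (0 : ℝ) 1, 0 ≤ f' t - f' 0 - c * t := fun t ht => by
    have := mono (φ := fun t => f' t - c * t)
      (fun t => (hf' t).sub ((hasDerivAt_id t).const_mul c))
      (fun t ht => sub_nonneg.2 (by simpa using hc t ht)) h0 ht ht.1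
    simp only [mul_zero, sub_zero] at this
    linarith
  have := mono (φ := fun t => f t - f' 0 * t - c / 2 * t ^ 2)
    (fun t => (((hf t).sub ((hasDerivAt_id' t).const_mul (f' 0))).sub
      ((hasDerivAt_pow 2 t).const_mul (c / 2))).congr_deriv (by simp only [mul_one]; ring))
    hslope h0 h1 zero_le_one
  simp only at this
  linarith

theorem Matrix.PosSemidef.mul_norm_sq_le_inner_toEuclideanCLM {ι : Type*} [Fintype ι]
    [DecidableEq ι] {M : Matrix ι ι ℝ} {κ : ℝ} (h : (M - κ • 1).PosSemidef)
    (u : EuclideanSpace ℝ ι) : κ * ‖u‖ ^ 2 ≤ ⟪u, Matrix.toEuclideanCLM (𝕜 := ℝ) M u⟫ := by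
  have := h.dotProduct_mulVec_nonneg u.ofLp
  rw [Matrix.inner_toEuclideanCLM, ← real_inner_self_eq_norm_sq,
    EuclideanSpace.inner_eq_star_dotProduct]
  simp only [star_trivial, Matrix.sub_mulVec, Matrix.smul_mulVec, Matrix.one_mulVec,
    dotProduct_sub, dotProduct_smul, smul_eq_mul, sub_nonneg] at this
  simpa [dotProduct_comm] using this

section NormedSpace

variable {E : Type*} [NormedAddCommGroup E] [NormedSpace ℝ E]

theorem ConvexOn.norm_sub_le_of_le_of_lt_on_sphere {F : E → ℝ} (hF : ConvexOn ℝ univ F)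
    {x₀ x : E} {A : ℝ} (hA : 0 ≤ A) (hsphere : ∀ z, ‖z - x₀‖ = A → F x₀ < F z)
    (hx : F x ≤ F x₀) : ‖x - x₀‖ ≤ A := by
  by_contra! hxA
  have hr : 0 < ‖x - x₀‖ := hA.trans_lt hxA
  have ht : A / ‖x - x₀‖ ∈ Icc (0 : ℝ) 1 := ⟨div_nonneg hA hr.le, div_le_one_of_le₀ hxA.le hr.le⟩
  have hz := (hF.convex_le (F x₀)).add_smul_sub_mem ⟨trivial, le_rfl⟩ ⟨trivial, hx⟩ ht
  refine (hsphere _ ?_).not_ge hz.2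
  rw [add_sub_cancel_left, norm_smul, Real.norm_of_nonneg ht.1, div_mul_cancel₀ _ hr.ne']

theorem ConvexOn.existsUnique_isMin_of_lt_on_sphere [FiniteDimensional ℝ E] {F : E → ℝ}
    (hF : ConvexOn ℝ univ F) {x₀ : E} {A : ℝ} (hA : 0 ≤ A)
    (hstrict : StrictConvexOn ℝ (closedBall x₀ A) F)
    (hsphere : ∀ z, ‖z - x₀‖ = A → F x₀ < F z) : ∃! x, ∀ y, F x ≤ F y := by
  have hball : ∀ x, F x ≤ F x₀ → x ∈ closedBall x₀ A := fun x hx =>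
    mem_closedBall_iff_norm.2 (hF.norm_sub_le_of_le_of_lt_on_sphere hA hsphere hx)
  obtain ⟨x, hx⟩ := hF.locallyLipschitz.continuous.exists_forall_le' x₀ <| by
    filter_upwards [(isCompact_closedBall x₀ A).compl_mem_cocompact] with y hy
    exact not_lt.1 fun hlt => hy (hball y hlt.le)
  exact ⟨x, hx, fun y hy => hstrict.eq_of_isMinOn (fun z _ => hy z) (fun z _ => hx z)
    (hball y (hy x₀)) (hball x (hx x₀))⟩

end NormedSpace

section InnerProductSpace

variable {E : Type*} [NormedAddCommGroup E] [InnerProductSpace ℝ E]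

theorem add_inner_add_le_of_hessian [CompleteSpace E] {s : Set E} (hs : Convex ℝ s)
    {f : E → ℝ} {g : E → E} {H : E → E →L[ℝ] E} (hg : ∀ x, HasGradientAt f (g x) x)
    (hH : ∀ x, HasFDerivAt g (H x) x) {κ : ℝ} (hκ : ∀ x ∈ s, ∀ u, κ * ‖u‖ ^ 2 ≤ ⟪u, H x u⟫)
    {x y : E} (hx : x ∈ s) (hy : y ∈ s) : f x + ⟪g x, y - x⟫ + κ / 2 * ‖y - x‖ ^ 2 ≤ f y := by
  set u := y - x
  have hline : ∀ t : ℝ, HasDerivAt (fun t : ℝ => x + t • u) u t := fun t => by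
    simpa using ((hasDerivAt_id t).smul_const u).const_add x
  have hf : ∀ t : ℝ, HasDerivAt (fun t => f (x + t • u)) ⟪g (x + t • u), u⟫ t := fun t => by
    have := (hg _).hasFDerivAt.comp_hasDerivAt t (hline t)
    rwa [InnerProductSpace.toDual_apply_apply] at this
  have hf' : ∀ t : ℝ, HasDerivAt (fun t => ⟪g (x + t • u), u⟫) ⟪H (x + t • u) u, u⟫ t :=
    fun t => by simpa using ((hH _).comp_hasDerivAt t (hline t)).inner ℝ (hasDerivAt_const t u)
  have := add_deriv_add_half_le_of_le_deriv2 hf hf' (c := κ * ‖u‖ ^ 2) fun t ht => by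
    rw [real_inner_comm]
    exact hκ _ (hs.add_smul_sub_mem hx hy ht) u
  simp only [zero_smul, add_zero, one_smul, u, add_sub_cancel] at this
  linarith

theorem strongConvexOn_of_add_inner_add_le {s : Set E} (hs : Convex ℝ s) {f : E → ℝ}
    {g : E → E} {κ : ℝ} (h : ∀ x ∈ s, ∀ y ∈ s, f x + ⟪g x, y - x⟫ + κ / 2 * ‖y - x‖ ^ 2 ≤ f y) :
    StrongConvexOn s κ f := by
  refine ⟨hs, fun x hx y hy a b ha hb hab => ?_⟩
  have hz := hs hx hy ha hb hab
  obtain rfl : b = 1 - a := by linarith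
  have hx' := h _ hz x hx
  have hy' := h _ hz y hy
  rw [show x - (a • x + (1 - a) • y) = (1 - a) • (x - y) by module, inner_smul_right,
    norm_smul, Real.norm_of_nonneg hb] at hx'
  rw [show y - (a • x + (1 - a) • y) = -a • (x - y) by module, inner_smul_right,
    norm_smul, norm_neg, Real.norm_of_nonneg ha] at hy'
  simp only [smul_eq_mul]
  nlinarith

def subdifferential (f : E → ℝ) (x : E) : Set E := {h | ∀ y, f x + ⟪h, y - x⟫ ≤ f y}

theorem ConvexOn.subdifferential_nonempty [FiniteDimensional ℝ E] {f : E → ℝ}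
    (hf : ConvexOn ℝ univ f) (x₀ : E) : (subdifferential f x₀).Nonempty := by
  set S : Set (E × ℝ) := {p | f p.1 - p.2 < 0}
  have hS_convex : Convex ℝ S := by
    simpa [S] using ((hf.comp_linearMap (LinearMap.fst ℝ E ℝ)).sub
      ((LinearMap.snd ℝ E ℝ).concaveOn convex_univ)).convex_lt 0
  have hS_open : IsOpen S :=
    isOpen_lt (by have := hf.locallyLipschitz.continuous; fun_prop) continuous_const
  -- `φ` separates `(x₀, f x₀)` from the open epigraph `S`; the subgradient is read off its
  -- restriction to `E × {0}`, rescaled by its (negative) slope `β` in the vertical direction.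
  obtain ⟨φ, hφ⟩ :=
    geometric_hahn_banach_open_point hS_convex hS_open (by simp [S] : (x₀, f x₀) ∉ S)
  set β := φ (0, 1)
  have hsplit : ∀ x t, φ (x, t) = φ (x, 0) + t * β := fun x t => by
    rw [← smul_eq_mul, ← map_smul, ← map_add, Prod.smul_mk, Prod.mk_add_mk]; simp
  have hβ : β < 0 := by
    have := hφ (x₀, f x₀ + 1) (by simp [S])
    rw [hsplit, hsplit x₀ (f x₀)] at this
    linarith
  have hsupport : ∀ x, φ (x, 0) + f x * β ≤ φ (x₀, 0) + f x₀ * β := fun x => by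
    refine le_of_forall_pos_lt_add fun ε hε => ?_
    have hδ : 0 < ε / -β := div_pos hε (neg_pos.2 hβ)
    have := hφ (x, f x + ε / -β) (show f x - (f x + ε / -β) < 0 by linarith)
    rw [hsplit, hsplit x₀ (f x₀), add_mul, div_mul_eq_mul_div, div_neg,
      mul_div_cancel_right₀ _ hβ.ne] at this
    linarith
  refine ⟨(-β)⁻¹ • (InnerProductSpace.toDual ℝ E).symm (φ.comp (.inl ℝ E ℝ)), fun x => ?_⟩
  rw [real_inner_smul_left, inner_sub_right, InnerProductSpace.toDual_symm_apply,
    InnerProductSpace.toDual_symm_apply, ContinuousLinearMap.comp_apply,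
    ContinuousLinearMap.comp_apply, ContinuousLinearMap.inl_apply, ContinuousLinearMap.inl_apply]
  have : (-β)⁻¹ * (φ (x, 0) - φ (x₀, 0)) ≤ f x - f x₀ := by
    rw [inv_mul_le_iff₀ (neg_pos.2 hβ)]
    linarith [hsupport x]
  linarith

section Hessian

variable [CompleteSpace E] {L R : E → ℝ} {g : E → E} {H : E → E →L[ℝ] E} {x₀ : E}
  {lam κ A : ℝ}

theorem le_add_mul_of_hessian_ge_of_mem_subdifferential (hg : ∀ x, HasGradientAt L (g x) x)
    (hH : ∀ x, HasFDerivAt g (H x) x) (hHκ : ∀ x ∈ closedBall x₀ A, ∀ u, κ * ‖u‖ ^ 2 ≤ ⟪u, H x u⟫)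
    (hlam : 0 ≤ lam) {h x : E} (hh : h ∈ subdifferential R x₀) (hx : x ∈ closedBall x₀ A) :
    L x₀ + lam * R x₀ + ‖x - x₀‖ * (κ / 2 * ‖x - x₀‖ - (‖g x₀‖ + lam * ‖h‖)) ≤
      L x + lam * R x := by
  have hL := add_inner_add_le_of_hessian (convex_closedBall x₀ A) hg hH hHκ
    (mem_closedBall_self (dist_nonneg.trans hx)) hx
  have hg₀ := neg_le_of_abs_le (abs_real_inner_le_norm (g x₀) (x - x₀))
  have hh' := neg_le_of_abs_le (abs_real_inner_le_norm h (x - x₀))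
  have hR := mul_le_mul_of_nonneg_left (hh x) hlam
  nlinarith

theorem norm_sub_mul_le_of_hessian_ge_of_mem_subdifferential
    (hg : ∀ x, HasGradientAt L (g x) x) (hH : ∀ x, HasFDerivAt g (H x) x)
    (hHκ : ∀ x ∈ closedBall x₀ A, ∀ u, κ * ‖u‖ ^ 2 ≤ ⟪u, H x u⟫) (hlam : 0 ≤ lam) {h x : E}
    (hh : h ∈ subdifferential R x₀) (hx : x ∈ closedBall x₀ A)
    (hle : L x + lam * R x ≤ L x₀ + lam * R x₀) : ‖x - x₀‖ * κ / 2 ≤ ‖g x₀‖ + lam * ‖h‖ := by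
  have := le_add_mul_of_hessian_ge_of_mem_subdifferential hg hH hHκ hlam hh hx
  rcases (norm_nonneg (x - x₀)).eq_or_lt with hr | hr
  · rw [← hr, zero_mul, zero_div]
    positivity
  · nlinarith

theorem strictConvexOn_add_mul_of_hessian_ge (hg : ∀ x, HasGradientAt L (g x) x)
    (hH : ∀ x, HasFDerivAt g (H x) x) (hHκ : ∀ x ∈ closedBall x₀ A, ∀ u, κ * ‖u‖ ^ 2 ≤ ⟪u, H x u⟫)
    (hκ : 0 < κ) (hR : ConvexOn ℝ univ R) (hlam : 0 ≤ lam) :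
    StrictConvexOn ℝ (closedBall x₀ A) fun x => L x + lam * R x :=
  ((strongConvexOn_of_add_inner_add_le (convex_closedBall x₀ A) fun _ hx _ hy =>
    add_inner_add_le_of_hessian (convex_closedBall x₀ A) hg hH hHκ hx hy).strictConvexOn
      hκ).add_convexOn ((hR.smul hlam).subset (subset_univ _) (convex_closedBall x₀ A))

end Hessian

end InnerProductSpace

theorem stmt3_general {n : ℕ} (L R : EuclideanSpace ℝ (Fin n) → ℝ)
    (hL : ConvexOn ℝ Set.univ L) (hR : ConvexOn ℝ Set.univ R)
    (g : EuclideanSpace ℝ (Fin n) → EuclideanSpace ℝ (Fin n))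
    (H : EuclideanSpace ℝ (Fin n) → Matrix (Fin n) (Fin n) ℝ)
    (hg : ∀ θ, HasGradientAt L (g θ) θ)
    (hH : ∀ θ, HasFDerivAt g (Matrix.toEuclideanCLM (𝕜 := ℝ) (H θ)) θ)
    (θ₀ : EuclideanSpace ℝ (Fin n)) (lam κ A : ℝ)
    (hlam : 0 ≤ lam) (hκ : 0 < κ) (hA : 0 < A)
    (hPSD : ∀ θ, ‖θ - θ₀‖ ≤ A → Matrix.PosSemidef (H θ - κ • 1))
    (hsmall : ‖g θ₀‖ +
        lam * sInf ((fun h => ‖h‖) '' {h | ∀ θ, R θ₀ + ⟪h, θ - θ₀⟫ ≤ R θ}) < κ * A / 2) :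
    ∃ θh : EuclideanSpace ℝ (Fin n),
      (∀ θ, L θh + lam * R θh ≤ L θ + lam * R θ) ∧
      (∀ θ', (∀ θ, L θ' + lam * R θ' ≤ L θ + lam * R θ) → θ' = θh) ∧
      ‖θh - θ₀‖ ≤ 2 / κ *
        (‖g θ₀‖ + lam * sInf ((fun h => ‖h‖) '' {h | ∀ θ, R θ₀ + ⟪h, θ - θ₀⟫ ≤ R θ})) := by
  have hHκ : ∀ θ ∈ closedBall θ₀ A, ∀ u,
      κ * ‖u‖ ^ 2 ≤ ⟪u, Matrix.toEuclideanCLM (𝕜 := ℝ) (H θ) u⟫ := fun θ hθ =>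
    (hPSD θ (mem_closedBall_iff_norm.1 hθ)).mul_norm_sq_le_inner_toEuclideanCLM
  have hne := hR.subdifferential_nonempty θ₀
  have hsInf := add_mul_csInf_image hne (u := norm)
    ⟨0, forall_mem_image.2 fun _ _ => norm_nonneg _⟩ (‖g θ₀‖) hlam
  obtain ⟨_, ⟨h₀, hh₀, rfl⟩, hh₀small⟩ :=
    exists_lt_of_csInf_lt (hne.image _) (hsInf.symm.trans_lt hsmall)
  have hsphere : ∀ z, ‖z - θ₀‖ = A → L θ₀ + lam * R θ₀ < L z + lam * R z := fun z hz => by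
    have := le_add_mul_of_hessian_ge_of_mem_subdifferential hg hH hHκ hlam hh₀
      (mem_closedBall_iff_norm.2 hz.le)
    rw [hz] at this
    nlinarith
  have hF : ConvexOn ℝ univ fun θ => L θ + lam * R θ := hL.add (hR.smul hlam)
  obtain ⟨θh, hmin, huniq⟩ := hF.existsUnique_isMin_of_lt_on_sphere hA.le
    (strictConvexOn_add_mul_of_hessian_ge hg hH hHκ hκ hR hlam) hsphere
  refine ⟨θh, hmin, huniq, ?_⟩
  have hθh := mem_closedBall_iff_norm.2 <| hF.norm_sub_le_of_le_of_lt_on_sphere hA.le hsphere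
    (hmin θ₀)
  refine (div_le_iff₀' (by positivity)).1 <|
    (le_csInf (hne.image _) (forall_mem_image.2 fun h hh => ?_)).trans_eq hsInf.symm
  rw [div_div_eq_mul_div]
  exact norm_sub_mul_le_of_hessian_ge_of_mem_subdifferential hg hH hHκ hlam hh hθh (hmin θ₀)

/-- If `L` is C² convex with Hessian `⪰ κI` on a ball of radius `A` around `θ₀`, `R` is
convex, `λ ≥ 0` and `‖∇L(θ₀)‖₂ + λ·inf_{h∈∂R(θ₀)}‖h‖₂ < κA/2`, then `L + λR` has a unique
global minimizer `θ̂` with `‖θ̂ − θ₀‖₂ ≤ (2/κ)(‖∇L(θ₀)‖₂ + λ·inf_{h∈∂R(θ₀)}‖h‖₂)`. -/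
theorem stmt3 {n : ℕ} (L R : EuclideanSpace ℝ (Fin n) → ℝ)
    (hL : ConvexOn ℝ Set.univ L) (hR : ConvexOn ℝ Set.univ R)
    (g : EuclideanSpace ℝ (Fin n) → EuclideanSpace ℝ (Fin n))
    (H : EuclideanSpace ℝ (Fin n) → Matrix (Fin n) (Fin n) ℝ)
    (hg : ∀ θ, HasGradientAt L (g θ) θ)
    (hH : ∀ θ, HasFDerivAt g (Matrix.toEuclideanCLM (𝕜 := ℝ) (H θ)) θ)
    (hHc : Continuous H)
    (θ₀ : EuclideanSpace ℝ (Fin n)) (lam κ A : ℝ)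
    (hlam : 0 ≤ lam) (hκ : 0 < κ) (hA : 0 < A)
    (hPSD : ∀ θ, ‖θ - θ₀‖ ≤ A → Matrix.PosSemidef (H θ - κ • 1))
    (hsmall : ‖g θ₀‖ +
        lam * sInf ((fun h => ‖h‖) '' {h | ∀ θ, R θ₀ + ⟪h, θ - θ₀⟫ ≤ R θ}) < κ * A / 2) :
    ∃ θh : EuclideanSpace ℝ (Fin n),
      (∀ θ, L θh + lam * R θh ≤ L θ + lam * R θ) ∧
      (∀ θ', (∀ θ, L θ' + lam * R θ' ≤ L θ + lam * R θ) → θ' = θh) ∧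
      ‖θh - θ₀‖ ≤ 2 / κ *
        (‖g θ₀‖ + lam * sInf ((fun h => ‖h‖) '' {h | ∀ θ, R θ₀ + ⟪h, θ - θ₀⟫ ≤ R θ})) :=
  stmt3_general L R hL hR g H hg hH θ₀ lam κ A hlam hκ hA hPSD hsmall
end

section
/- Let L ∈ C²(ℝᵖ) be convex and R : ℝᵖ → ℝ be a convex function such that R(α + β) = R(α) + R(β) for all α ∈ M and β ∈ M⊥, where M is a linear subspace of ℝᵖ. Suppose there is a continuous function R* : ℝᵖ → ℝ with |⟨α, β⟩| ≤ R(α)R*(β) for all α ∈ M⊥, β ∈ ℝᵖ. Let λ ≥ 0, L_λ(θ) = L(θ) + λR(θ), and let θ̂ ∈ argmin_{θ ∈ M} L_λ(θ). If R*(∇L(θ̂)) < λ and θᵀ∇²L(θ̂)θ > 0 for all nonzero θ ∈ M, then θ̂ is the unique global minimizer of L_λ over all of ℝᵖ. -/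
/-!
Split `θ = α + β` with `α ∈ M`, `β ∈ M⊥`. The gradient inequality for `L` at `α`, additivity of
`R` and the pairing bound give `L_λ(α + β) ≥ L_λ(α) + R(β) (λ - R*(∇L(α)))`. The pairing bound
at `(β, β)` and `(-β, β)`, together with `R(β) + R(-β) ≥ 2 R(0) = 0`, shows `R > 0` on
`M⊥ \ {0}`, and by continuity `R*(∇L(α)) < λ` for `α` near `θ̂`, so
near `θ̂` leaving `M` strictly increases `L_λ`. Inside `M`, a second minimizer would make `L`
affine on the segment to it, contradicting the positive definite Hessian. So `θ̂` is a strict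
local minimizer of the convex `L_λ`, hence its unique global one.
-/

open Set Filter Topology
open scoped RealInnerProductSpace

section VectorSpace

variable {E : Type*} [AddCommGroup E] [Module ℝ E]

theorem ConvexOn.eq_of_add_eq_min {S : Set E} {f h : E → ℝ} (hf : ConvexOn ℝ S f)
    (hh : ConvexOn ℝ S h) {x y : E} (hx : x ∈ S) (hy : y ∈ S)
    (hmin : ∀ z ∈ S, f x + h x ≤ f z + h z) (heq : f y + h y = f x + h x) {t : ℝ}
    (ht : t ∈ Icc (0 : ℝ) 1) : f (x + t • (y - x)) = f x + t * (f y - f x) := by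
  have hcomb : (1 - t) • x + t • y = x + t • (y - x) := by module
  have hf' := hf.2 hx hy (sub_nonneg.2 ht.2) ht.1 (sub_add_cancel 1 t)
  have hh' := hh.2 hx hy (sub_nonneg.2 ht.2) ht.1 (sub_add_cancel 1 t)
  have hmem := hf.1 hx hy (sub_nonneg.2 ht.2) ht.1 (sub_add_cancel 1 t)
  rw [hcomb] at hf' hh' hmem
  simp only [smul_eq_mul] at hf' hh'
  have hle := hmin _ hmem
  have ht_eq : t * (f y + h y) = t * (f x + h x) := by rw [heq]
  linarith

end VectorSpace

section NormedSpace

variable {E : Type*} [NormedAddCommGroup E] [NormedSpace ℝ E]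

theorem ConvexOn.lt_of_eventually_lt {F : E → ℝ} (hF : ConvexOn ℝ univ F) {x : E}
    (hloc : ∀ᶠ z in 𝓝 x, z ≠ x → F x < F z) {y : E} (hy : y ≠ x) : F x < F y := by
  have hlim : Tendsto (fun t : ℝ => x + t • (y - x)) (𝓝[>] 0) (𝓝 x) := by
    have : Continuous (fun t : ℝ => x + t • (y - x)) := by fun_prop
    simpa using (this.tendsto 0).mono_left nhdsWithin_le_nhds
  obtain ⟨t, hzloc, ht⟩ := ((hlim.eventually hloc).and (Ioo_mem_nhdsGT one_pos)).exists
  have hz : x + t • (y - x) ≠ x := by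
    simpa [sub_eq_zero] using And.intro ht.1.ne' hy
  have hconv : F (x + t • (y - x)) ≤ (1 - t) * F x + t * F y := by
    have := hF.2 (mem_univ x) (mem_univ y) (sub_nonneg.2 ht.2.le) ht.1.le (sub_add_cancel 1 t)
    rw [show (1 - t) • x + t • y = x + t • (y - x) by module] at this
    simpa using this
  have : t * F x < t * F y := by linarith [hzloc hz]
  exact lt_of_mul_lt_mul_left this ht.1.le

theorem HasDerivAt.eq_zero_of_eqOn_Ioo {φ : ℝ → ℝ} {a b c d : ℝ} (hab : a < b)
    (hφ : HasDerivAt φ d a) (hc : EqOn φ (fun _ => c) (Ioo a b)) : d = 0 := by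
  have hev : φ =ᶠ[𝓝[>] a] fun _ => c := eventuallyEq_of_mem (Ioo_mem_nhdsGT hab) hc
  have ha : φ a = c :=
    tendsto_nhds_unique (hφ.continuousAt.continuousWithinAt (s := Ioi a)).tendsto
      (tendsto_const_nhds.congr' hev.symm)
  have hconst : HasDerivWithinAt φ 0 (Ioi a) a :=
    (hasDerivWithinAt_const a (Ioi a) c).congr_of_eventuallyEq hev ha
  exact (uniqueDiffWithinAt_Ioi a).eq_deriv _ hφ.hasDerivWithinAt hconst

end NormedSpace

section InnerProductSpace

variable {E : Type*} [NormedAddCommGroup E] [InnerProductSpace ℝ E]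

theorem ConvexOn.pos_of_abs_inner_le_mul {K : Submodule ℝ E} {R S : E → ℝ}
    (hR : ConvexOn ℝ univ R) (hR0 : R 0 = 0)
    (hpair : ∀ α ∈ K, ∀ β, |⟪α, β⟫| ≤ R α * S β) {β : E} (hβK : β ∈ K) (hβ : β ≠ 0) :
    0 < R β := by
  have hsq : 0 < ‖β‖ ^ 2 := by positivity
  have h₁ : ‖β‖ ^ 2 ≤ R β * S β := by
    simpa [real_inner_self_eq_norm_sq] using hpair β hβK β
  have h₂ : ‖β‖ ^ 2 ≤ R (-β) * S β := by
    simpa [real_inner_self_eq_norm_sq] using hpair (-β) (neg_mem hβK) β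
  have hsum : 0 ≤ R β + R (-β) := by
    have := hR.2 (mem_univ β) (mem_univ (-β)) (by norm_num : (0 : ℝ) ≤ 1 / 2)
      (by norm_num : (0 : ℝ) ≤ 1 / 2) (by norm_num)
    simp only [smul_neg, add_neg_cancel, hR0, smul_eq_mul] at this
    linarith
  rcases mul_pos_iff.1 (hsq.trans_le h₁) with ⟨hRβ, -⟩ | ⟨hRβ, hSβ⟩
  · exact hRβ
  · have hRnegβ : R (-β) < 0 := (neg_iff_neg_of_mul_pos (hsq.trans_le h₂)).2 hSβ
    linarith

variable [CompleteSpace E]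

theorem HasGradientAt.hasDerivAt_comp_add_smul {f : E → ℝ} {g x v : E} {t : ℝ}
    (hf : HasGradientAt f g (x + t • v)) :
    HasDerivAt (fun s : ℝ => f (x + s • v)) ⟪g, v⟫ t := by
  have hline : HasDerivAt (fun s : ℝ => x + s • v) v t := by
    simpa using ((hasDerivAt_id t).smul_const v).const_add x
  simpa [Function.comp_def] using hf.hasFDerivAt.comp_hasDerivAt t hline

theorem ConvexOn.add_inner_le_of_hasGradientAt {f : E → ℝ} (hf : ConvexOn ℝ univ f) {g x : E}
    (hg : HasGradientAt f g x) (v : E) : f x + ⟪g, v⟫ ≤ f (x + v) := by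
  have hconv : ConvexOn ℝ univ (fun s : ℝ => f (x + s • v)) :=
    (hf.translate_right x).comp_linearMap (LinearMap.smulRight LinearMap.id v)
  have hderiv : HasDerivAt (fun s : ℝ => f (x + s • v)) ⟪g, v⟫ 0 :=
    HasGradientAt.hasDerivAt_comp_add_smul (by simpa using hg)
  have := hconv.le_slope_of_hasDerivAt (mem_univ 0) (mem_univ 1) zero_lt_one hderiv
  simp only [slope_def_field, one_smul, zero_smul, add_zero, sub_zero, div_one] at this
  linarith

theorem inner_apply_eq_zero_of_eqOn_segment {f : E → ℝ} {g : E → E} {A : E →L[ℝ] E} {x y : E}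
    (hg : ∀ z, HasGradientAt f (g z) z) (hA : HasFDerivAt g A x)
    (haff : ∀ t ∈ Ioo (0 : ℝ) 1, f (x + t • (y - x)) = f x + t * (f y - f x)) :
    ⟪y - x, A (y - x)⟫ = 0 := by
  set v := y - x
  have hslope : EqOn (fun t : ℝ => ⟪v, g (x + t • v)⟫) (fun _ => f y - f x) (Ioo 0 1) := by
    intro t ht
    have hline : HasDerivAt (fun s : ℝ => f x + s * (f y - f x)) (f y - f x) t := by
      simpa using ((hasDerivAt_id t).mul_const (f y - f x)).const_add (f x)
    show ⟪v, g (x + t • v)⟫ = f y - f x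
    rw [real_inner_comm]
    exact (hg _).hasDerivAt_comp_add_smul.unique
      (hline.congr_of_eventuallyEq (eventuallyEq_of_mem (Ioo_mem_nhds ht.1 ht.2) haff))
  have hψ : HasDerivAt (fun t : ℝ => ⟪v, g (x + t • v)⟫) ⟪v, A v⟫ 0 := by
    have hline : HasDerivAt (fun t : ℝ => x + t • v) v 0 := by
      simpa using ((hasDerivAt_id (0 : ℝ)).smul_const v).const_add x
    have hgline : HasDerivAt (fun t : ℝ => g (x + t • v)) (A v) 0 :=
      (by simpa using hA : HasFDerivAt g A (x + (0 : ℝ) • v)).comp_hasDerivAt 0 hline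
    exact (innerSL ℝ v).hasFDerivAt.comp_hasDerivAt 0 hgline
  exact hψ.eq_zero_of_eqOn_Ioo zero_lt_one hslope

theorem lt_add_of_inner_apply_pos {S : Set E} {f h : E → ℝ} {g : E → E} {A : E →L[ℝ] E}
    (hf : ConvexOn ℝ S f) (hh : ConvexOn ℝ S h) (hg : ∀ z, HasGradientAt f (g z) z) {x : E}
    (hA : HasFDerivAt g A x) (hx : x ∈ S) (hmin : ∀ z ∈ S, f x + h x ≤ f z + h z)
    (hpos : ∀ y ∈ S, y ≠ x → 0 < ⟪y - x, A (y - x)⟫) {y : E} (hy : y ∈ S) (hyx : y ≠ x) :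
    f x + h x < f y + h y := by
  refine (hmin y hy).lt_of_ne fun heq => (hpos y hy hyx).ne' ?_
  exact inner_apply_eq_zero_of_eqOn_segment hg hA fun t ht =>
    hf.eq_of_add_eq_min hh hx hy hmin heq.symm (Ioo_subset_Icc_self ht)

theorem add_mul_sub_le_of_mem_orthogonal {M : Submodule ℝ E} {L R S : E → ℝ} {g : E → E}
    (hL : ConvexOn ℝ univ L) (hRadd : ∀ α ∈ M, ∀ β ∈ Mᗮ, R (α + β) = R α + R β)
    (hpair : ∀ α ∈ Mᗮ, ∀ β, |⟪α, β⟫| ≤ R α * S β) (lam : ℝ) {α β : E}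
    (hg : HasGradientAt L (g α) α) (hα : α ∈ M) (hβ : β ∈ Mᗮ) :
    L α + lam * R α + R β * (lam - S (g α)) ≤ L (α + β) + lam * R (α + β) := by
  have hgrad := hL.add_inner_le_of_hasGradientAt hg β
  have hinner : -(R β * S (g α)) ≤ ⟪g α, β⟫ := by
    rw [real_inner_comm]
    exact (abs_le.1 (hpair β hβ (g α))).1
  rw [hRadd α hα β hβ]
  linarith

theorem lt_add_of_dual_lt_of_starProjection {M : Submodule ℝ E} [M.HasOrthogonalProjection]
    {L R S : E → ℝ} {g : E → E} (hL : ConvexOn ℝ univ L) (hR : ConvexOn ℝ univ R)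
    (hRadd : ∀ α ∈ M, ∀ β ∈ Mᗮ, R (α + β) = R α + R β)
    (hpair : ∀ α ∈ Mᗮ, ∀ β, |⟪α, β⟫| ≤ R α * S β) (hg : ∀ z, HasGradientAt L (g z) z)
    {lam : ℝ} {θh x : E} (hmin : ∀ θ ∈ M, L θh + lam * R θh ≤ L θ + lam * R θ)
    (hstrictM : ∀ α ∈ M, α ≠ θh → L θh + lam * R θh < L α + lam * R α)
    (hx : S (g (M.starProjection x)) < lam) (hne : x ≠ θh) :
    L θh + lam * R θh < L x + lam * R x := by
  set α := M.starProjection x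
  have hαM : α ∈ M := M.starProjection_apply_mem x
  have hβ : x - α ∈ Mᗮ := M.sub_starProjection_mem_orthogonal x
  have key := add_mul_sub_le_of_mem_orthogonal hL hRadd hpair lam (hg α) hαM hβ
  rw [add_sub_cancel] at key
  by_cases hβ0 : x - α = 0
  · rw [sub_eq_zero.1 hβ0] at hne ⊢
    exact hstrictM α hαM hne
  · have hR0 : R 0 = 0 := by simpa using hRadd 0 M.zero_mem 0 Mᗮ.zero_mem
    have hgap := mul_pos (hR.pos_of_abs_inner_le_mul hR0 hpair hβ hβ0) (sub_pos.2 hx)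
    linarith [hmin α hαM]

end InnerProductSpace

theorem Matrix.inner_toEuclideanCLM_self {n : Type*} [Fintype n] [DecidableEq n]
    (A : Matrix n n ℝ) (x : EuclideanSpace ℝ n) :
    ⟪x, Matrix.toEuclideanCLM (𝕜 := ℝ) A x⟫ = ∑ i, ∑ j, x i * A i j * x j := by
  simp [Matrix.inner_toEuclideanCLM, dotProduct, mulVec, Finset.mul_sum, mul_assoc]

theorem stmt4_general {p : ℕ} (L R Rstar : EuclideanSpace ℝ (Fin p) → ℝ)
    (hL : ConvexOn ℝ Set.univ L) (hR : ConvexOn ℝ Set.univ R)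
    (g : EuclideanSpace ℝ (Fin p) → EuclideanSpace ℝ (Fin p))
    (H : EuclideanSpace ℝ (Fin p) → Matrix (Fin p) (Fin p) ℝ)
    (hg : ∀ θ, HasGradientAt L (g θ) θ)
    (hH : ∀ θ, HasFDerivAt g (Matrix.toEuclideanCLM (𝕜 := ℝ) (H θ)) θ)
    (M : Submodule ℝ (EuclideanSpace ℝ (Fin p)))
    (hRadd : ∀ α ∈ M, ∀ β ∈ Mᗮ, R (α + β) = R α + R β)
    (hRstarCont : Continuous Rstar)
    (hpair : ∀ α ∈ Mᗮ, ∀ β : EuclideanSpace ℝ (Fin p), |⟪α, β⟫| ≤ R α * Rstar β)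
    (lam : ℝ) (hlam : 0 ≤ lam)
    (θh : EuclideanSpace ℝ (Fin p)) (hθhM : θh ∈ M)
    (hmin : ∀ θ ∈ M, L θh + lam * R θh ≤ L θ + lam * R θ)
    (hdual : Rstar (g θh) < lam)
    (hpos : ∀ θ ∈ M, θ ≠ 0 → 0 < ∑ i, ∑ j, θ i * H θh i j * θ j) :
    ∀ θ : EuclideanSpace ℝ (Fin p), θ ≠ θh → L θh + lam * R θh < L θ + lam * R θ := by
  have hstrictM : ∀ α ∈ M, α ≠ θh → L θh + lam * R θh < L α + lam * R α :=
    fun α hα hne => lt_add_of_inner_apply_pos (hL.subset (subset_univ _) M.convex)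
      ((hR.smul hlam).subset (subset_univ _) M.convex) hg (hH θh) hθhM hmin
      (fun y hy hyθ => by
        rw [Matrix.inner_toEuclideanCLM_self]
        exact hpos (y - θh) (sub_mem hy hθhM) (sub_ne_zero.2 hyθ)) hα hne
  have hnear : ∀ᶠ x in 𝓝 θh, Rstar (g (M.starProjection x)) < lam := by
    have hgc : Continuous g := continuous_iff_continuousAt.2 fun θ => (hH θ).continuousAt
    refine (hRstarCont.comp (hgc.comp M.starProjection.continuous)).continuousAt.eventually_lt
      continuousAt_const ?_
    simpa [Submodule.starProjection_eq_self_iff.2 hθhM] using hdual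
  exact fun θ hθ => (hL.add (hR.smul hlam)).lt_of_eventually_lt
    (hnear.mono fun x hx hne => lt_add_of_dual_lt_of_starProjection hL hR hRadd hpair hg hmin
      hstrictM hx hne) hθ

/-- Dual certificate lemma: if `θ̂` minimizes `L + λR` over a subspace `M`, the penalty
decomposes additively over `M ⊕ M⊥`, `|⟨α,β⟩| ≤ R(α)R*(β)` for `α ∈ M⊥`, the dual norm of
the gradient at `θ̂` is `< λ`, and the Hessian at `θ̂` is positive definite on `M`, then
`θ̂` is the unique global minimizer of `L + λR` over the whole space. -/
theorem stmt4 {p : ℕ} (L R Rstar : EuclideanSpace ℝ (Fin p) → ℝ)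
    (hL : ConvexOn ℝ Set.univ L) (hR : ConvexOn ℝ Set.univ R)
    (g : EuclideanSpace ℝ (Fin p) → EuclideanSpace ℝ (Fin p))
    (H : EuclideanSpace ℝ (Fin p) → Matrix (Fin p) (Fin p) ℝ)
    (hg : ∀ θ, HasGradientAt L (g θ) θ)
    (hH : ∀ θ, HasFDerivAt g (Matrix.toEuclideanCLM (𝕜 := ℝ) (H θ)) θ)
    (hHc : Continuous H)
    (M : Submodule ℝ (EuclideanSpace ℝ (Fin p)))
    (hRadd : ∀ α ∈ M, ∀ β ∈ Mᗮ, R (α + β) = R α + R β)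
    (hRstarCont : Continuous Rstar)
    (hpair : ∀ α ∈ Mᗮ, ∀ β : EuclideanSpace ℝ (Fin p), |⟪α, β⟫| ≤ R α * Rstar β)
    (lam : ℝ) (hlam : 0 ≤ lam)
    (θh : EuclideanSpace ℝ (Fin p)) (hθhM : θh ∈ M)
    (hmin : ∀ θ ∈ M, L θh + lam * R θh ≤ L θ + lam * R θ)
    (hdual : Rstar (g θh) < lam)
    (hpos : ∀ θ ∈ M, θ ≠ 0 → 0 < ∑ i, ∑ j, θ i * H θh i j * θ j) :
    ∀ θ : EuclideanSpace ℝ (Fin p), θ ≠ θh → L θh + lam * R θh < L θ + lam * R θ :=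
  stmt4_general L R Rstar hL hR g H hg hH M hRadd hRstarCont hpair lam hlam θh hθhM hmin hdual hpos
end
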